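/- Let p ∈ (0,1) and let s ≤ ((1−p)/12)². Then for all sufficiently large n, the monic Chebyshev polynomial M_n(z) = 2^{1−n} cos(n arccos(z)) satisfies |M_n(z)| ≤ 2^{−pn} for every complex z with |z| ≤ 1 and |arg(z)| ≤ s. -/

import Mathlib

/-!
Put `ζ = arccos z` and `y = Im ζ`; then `|cos (n ζ)| ≤ e^{n |y|}`. From
`z = cos ζ = cos x cosh y - i sin x sinh y` and `|z| ≤ 1` one gets `sinh² y ≤ sin² x`, hence
`sinh⁴ y ≤ (Im z)² ≤ (arg z)²`, so `|y| ≤ √|arg z| ≤ (1 - p) / 12`. As `1 / 12 < log 2`, the bound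
`2^{1-n} e^{n (1 - p) / 12}` eventually drops below `2^{-p n}`.
-/

/-- The principal branch of the complex arccosine,
`arccos z = -i log (z + i (1 - z²)^(1/2))`. -/
noncomputable def carccos (z : ℂ) : ℂ :=
  -Complex.I * Complex.log (z + Complex.I * (1 - z ^ 2) ^ ((1 : ℂ) / 2))

open Complex in
lemma cos_carccos (z : ℂ) : cos (carccos z) = z := by
  set u : ℂ := (1 - z ^ 2) ^ ((1 : ℂ) / 2)
  have hu : u ^ 2 = 1 - z ^ 2 := by simp only [u, one_div]; exact cpow_ofNat_inv_pow _ 2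
  have hw : (z + I * u) * (z - I * u) = 1 := by linear_combination hu - u ^ 2 * I_sq
  have hw₀ : z + I * u ≠ 0 := left_ne_zero_of_mul_eq_one hw
  have hexp : exp (carccos z * I) = z + I * u := by
    rw [carccos, show -I * log (z + I * u) * I = -(I * I) * log (z + I * u) by ring,
      I_mul_I, neg_neg, one_mul, exp_log hw₀]
  rw [cos, neg_mul, exp_neg, hexp, inv_eq_of_mul_eq_one_right hw]
  ring

namespace Complex

lemma norm_cos_le_exp_abs_im (w : ℂ) : ‖cos w‖ ≤ Real.exp |w.im| := by
  have h₁ : ‖exp (w * I)‖ ≤ Real.exp |w.im| := by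
    rw [norm_exp]; gcongr; simpa using neg_le_abs w.im
  have h₂ : ‖exp (-w * I)‖ ≤ Real.exp |w.im| := by
    rw [norm_exp]; gcongr; simpa using le_abs_self w.im
  rw [cos, norm_div, Complex.norm_two]
  linarith [norm_add_le (exp (w * I)) (exp (-w * I))]

lemma sinh_im_sq_le_abs_im_cos (w : ℂ) (h : ‖cos w‖ ≤ 1) :
    Real.sinh w.im ^ 2 ≤ |(cos w).im| := by
  have hre : (cos w).re = Real.cos w.re * Real.cosh w.im := by
    rw [cos_eq]; simp [← ofReal_cos, ← ofReal_cosh, ← ofReal_sin, ← ofReal_sinh]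
  have him : (cos w).im = -(Real.sin w.re * Real.sinh w.im) := by
    rw [cos_eq]; simp [← ofReal_cos, ← ofReal_cosh, ← ofReal_sin, ← ofReal_sinh]
  have hnorm : (cos w).re ^ 2 + (cos w).im ^ 2 ≤ 1 := by
    rw [sq, sq, ← normSq_apply, normSq_eq_norm_sq]
    exact pow_le_one₀ (norm_nonneg _) h
  -- `cos² x cosh² y + sin² x sinh² y = cos² x + sinh² y`
  have hsinh : Real.sinh w.im ^ 2 ≤ Real.sin w.re ^ 2 := by
    rw [hre, him, mul_pow, neg_sq, mul_pow, Real.cosh_sq] at hnorm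
    nlinarith [Real.sin_sq_add_cos_sq w.re]
  have : (Real.sinh w.im ^ 2) ^ 2 ≤ |(cos w).im| ^ 2 := by
    rw [sq_abs, him, neg_sq, mul_pow, sq (Real.sinh w.im ^ 2)]
    exact mul_le_mul_of_nonneg_right hsinh (sq_nonneg _)
  exact (sq_le_sq₀ (sq_nonneg _) (abs_nonneg _)).1 this

lemma abs_im_le_abs_arg {z : ℂ} (h : ‖z‖ ≤ 1) : |z.im| ≤ |arg z| := by
  rw [← norm_mul_sin_arg, abs_mul, abs_norm]
  exact (mul_le_of_le_one_left (abs_nonneg _) h).trans Real.abs_sin_le_abs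

end Complex

open Real

lemma abs_im_carccos_le_sqrt_abs_arg {z : ℂ} (hz : ‖z‖ ≤ 1) :
    |(carccos z).im| ≤ √|Complex.arg z| := by
  have hsinh := Complex.sinh_im_sq_le_abs_im_cos (carccos z) (by rwa [cos_carccos])
  rw [cos_carccos] at hsinh
  calc |(carccos z).im| ≤ |sinh (carccos z).im| := by
        rw [abs_sinh]; exact self_le_sinh_iff.2 (abs_nonneg _)
    _ = √(sinh (carccos z).im ^ 2) := (sqrt_sq_eq_abs _).symm
    _ ≤ √|Complex.arg z| := sqrt_le_sqrt (hsinh.trans (Complex.abs_im_le_abs_arg hz))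

lemma norm_two_zpow_mul_cos_le (n : ℕ) (w : ℂ) :
    ‖(2 : ℂ) ^ (1 - (n : ℤ)) * Complex.cos (n * w)‖ ≤ exp (log 2 - n * (log 2 - |w.im|)) := by
  have htwo : ‖(2 : ℂ) ^ (1 - (n : ℤ))‖ = exp (log 2 * (1 - n)) := by
    rw [norm_zpow, Complex.norm_two, ← rpow_intCast, rpow_def_of_pos two_pos]
    push_cast
    ring_nf
  have hcos : ‖Complex.cos (n * w)‖ ≤ exp (n * |w.im|) := by
    simpa [abs_mul] using Complex.norm_cos_le_exp_abs_im (n * w)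
  calc ‖(2 : ℂ) ^ (1 - (n : ℤ)) * Complex.cos (n * w)‖
      ≤ exp (log 2 * (1 - n)) * exp (n * |w.im|) := by rw [norm_mul, htwo]; gcongr
    _ = exp (log 2 - n * (log 2 - |w.im|)) := by rw [← exp_add]; ring_nf

lemma exists_forall_ge_exp_le_two_rpow {p b : ℝ} (hb : b < (1 - p) * log 2) :
    ∃ N : ℕ, ∀ n ≥ N, exp (log 2 - n * (log 2 - b)) ≤ 2 ^ (-(p * n)) := by
  obtain ⟨N, hN⟩ := exists_nat_ge (log 2 / ((1 - p) * log 2 - b))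
  refine ⟨N, fun n hn => ?_⟩
  have hn' : log 2 ≤ n * ((1 - p) * log 2 - b) := by
    rw [div_le_iff₀ (sub_pos.2 hb)] at hN
    exact hN.trans (by gcongr)
  rw [rpow_def_of_pos two_pos, exp_le_exp]
  linarith

theorem monic_chebyshev_sector_bound (p : ℝ) (hp : p ∈ Set.Ioo (0 : ℝ) 1)
    (s : ℝ) (hs : s ≤ ((1 - p) / 12) ^ 2) :
    ∃ N : ℕ, ∀ n : ℕ, N ≤ n → ∀ z : ℂ,
      ‖z‖ ≤ 1 → |Complex.arg z| ≤ s →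
      ‖(2 : ℂ) ^ (1 - (n : ℤ)) * Complex.cos (n * carccos z)‖ ≤
        (2 : ℝ) ^ (-(p * n)) := by
  have hb : (1 - p) / 12 < (1 - p) * Real.log 2 := by
    nlinarith [hp.2, Real.log_two_gt_d9]
  obtain ⟨N, hN⟩ := exists_forall_ge_exp_le_two_rpow hb
  refine ⟨N, fun n hn z hz harg => ?_⟩
  have him : |(carccos z).im| ≤ (1 - p) / 12 := calc
    |(carccos z).im| ≤ √|Complex.arg z| := abs_im_carccos_le_sqrt_abs_arg hz
    _ ≤ √(((1 - p) / 12) ^ 2) := sqrt_le_sqrt (harg.trans hs)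
    _ = (1 - p) / 12 := sqrt_sq (by linarith [hp.2])
  calc ‖(2 : ℂ) ^ (1 - (n : ℤ)) * Complex.cos (n * carccos z)‖
      ≤ exp (log 2 - n * (log 2 - |(carccos z).im|)) := norm_two_zpow_mul_cos_le n _
    _ ≤ exp (log 2 - n * (log 2 - (1 - p) / 12)) := by gcongr
    _ ≤ 2 ^ (-(p * n)) := hN n hn
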